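/- arXiv:1903.07653 — 4 statements merged into one kernel-verified Lean document; each statement's English description precedes it below -/
import Mathlib

section
/- Let Ω ⊆ ℝ^N be open, let Λ assign to each x ∈ Ω a Lebesgue-measurable subset Λ(x) ⊆ Ω such that Λ is ρ-continuous and maps bounded sets to bounded subsets of Ω whose closure is a compact subset of Ω. Let τ : Ω → (0,∞) be upper semicontinuous and Λ-admissible, and let ζ ∈ L¹_loc(Ω,ℝ) with ζ ≥ 0. Then for every x ∈ Ω, e^{−Lτ(x)} ∫_{Λ(x)} e^{Lτ(y)} ζ(y) dy → 0 as L → +∞. -/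
open MeasureTheory Set Filter Bornology

/-- If `Λ` is ρ-continuous and maps bounded sets to bounded subsets of `Ω`
with compact closure in `Ω`, `τ : Ω → (0,∞)` is upper semicontinuous and Λ-admissible,
and `0 ≤ ζ ∈ L¹_loc(Ω)`, then for every `x ∈ Ω`,
`e^{−Lτ(x)} ∫_{Λ(x)} e^{Lτ(y)} ζ(y) dy → 0` as `L → +∞`. -/
theorem stmt_6
    (N : ℕ) (Ω : Set (Fin N → ℝ)) (hΩ : IsOpen Ω)
    (Λ : (Fin N → ℝ) → Set (Fin N → ℝ))
    (hΛsub : ∀ x ∈ Ω, Λ x ⊆ Ω)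
    (hΛmeas : ∀ x ∈ Ω, MeasurableSet (Λ x))
    -- ρ-continuity: ℓ(Λ(x) △ Λ(x₀)) → 0 as x → x₀ in Ω
    (hΛρ : ∀ x₀ ∈ Ω, Tendsto (fun x => volume (symmDiff (Λ x) (Λ x₀)))
      (nhdsWithin x₀ Ω) (nhds 0))
    -- Λ maps bounded sets to bounded subsets of Ω whose closure is compact and ⊆ Ω
    (hΛbdd : ∀ S ⊆ Ω, IsBounded S →
      IsCompact (closure (⋃ x ∈ S, Λ x)) ∧ closure (⋃ x ∈ S, Λ x) ⊆ Ω)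
    -- τ : Ω → (0,∞) upper semicontinuous and Λ-admissible
    (τ : (Fin N → ℝ) → ℝ) (hτpos : ∀ x ∈ Ω, 0 < τ x)
    (hτusc : UpperSemicontinuousOn τ Ω)
    (hτadm : ∀ x₀ ∈ Ω, ∀ δ > (0 : ℝ), ∃ x ∈ Metric.ball x₀ δ ∩ Ω,
      sSup (τ '' (Λ x ∩ Λ x₀)) < τ x₀)
    -- 0 ≤ ζ ∈ L¹_loc(Ω,ℝ)
    (ζ : (Fin N → ℝ) → ℝ) (hζmeas : Measurable ζ) (hζpos : ∀ y, 0 ≤ ζ y)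
    (hζloc : ∀ K ⊆ Ω, IsCompact K → IntegrableOn ζ K) :
    ∀ x ∈ Ω, Tendsto
      (fun L : ℝ => Real.exp (-L * τ x) * ∫ y in Λ x, Real.exp (L * τ y) * ζ y)
      atTop (nhds 0) := by
  classical
  intro x₀ hx₀
  -- compact closure of Λ x₀ inside Ω
  obtain ⟨hKc, hKΩ⟩ := hΛbdd {x₀} (by simpa using hx₀) isBounded_singleton
  rw [show (⋃ x ∈ ({x₀} : Set (Fin N → ℝ)), Λ x) = Λ x₀ by simp] at hKc hKΩ
  set K := closure (Λ x₀) with hKdef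
  have hΛK : Λ x₀ ⊆ K := subset_closure
  -- sublevel sets of τ within Ω are open
  have hopen : ∀ c : ℝ, IsOpen {y | y ∈ Ω ∧ τ y < c} := by
    intro c
    rw [isOpen_iff_mem_nhds]
    rintro y ⟨hyΩ, hyc⟩
    have h1 : ∀ᶠ z in nhdsWithin y Ω, τ z < c := hτusc y hyΩ c hyc
    rw [hΩ.nhdsWithin_eq hyΩ] at h1
    filter_upwards [h1, hΩ.mem_nhds hyΩ] with z h2 h3
    exact ⟨h3, h2⟩
  -- τ is bounded above on K
  obtain ⟨C, hC⟩ : ∃ C : ℝ, ∀ y ∈ K, τ y ≤ C := by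
    obtain ⟨t, ht⟩ := hKc.elim_finite_subcover
      (fun n : ℕ => {y | y ∈ Ω ∧ τ y < n}) (fun n => hopen n) (by
        intro y hy
        obtain ⟨n, hn⟩ := exists_nat_gt (τ y)
        exact mem_iUnion.2 ⟨n, hKΩ hy, hn⟩)
    refine ⟨(t.sup id : ℕ), fun y hy => ?_⟩
    obtain ⟨n, hnt, hn⟩ := mem_iUnion₂.1 (ht hy)
    exact hn.2.le.trans (Nat.cast_le.2 (Finset.le_sup (f := id) hnt))
  have hBdd : ∀ x, BddAbove (τ '' (Λ x ∩ Λ x₀)) := by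
    intro x
    exact ⟨C, by rintro _ ⟨y, hy, rfl⟩; exact hC y (hΛK hy.2)⟩
  -- the set where τ ≥ τ x₀ inside Λ x₀ is null
  have hN0 : volume {y | y ∈ Λ x₀ ∧ τ x₀ ≤ τ y} = 0 := by
    by_contra h
    have hεpos : 0 < volume {y | y ∈ Λ x₀ ∧ τ x₀ ≤ τ y} := pos_iff_ne_zero.2 h
    have hev : {x | volume (symmDiff (Λ x) (Λ x₀)) < volume {y | y ∈ Λ x₀ ∧ τ x₀ ≤ τ y}}
        ∈ nhdsWithin x₀ Ω := hΛρ x₀ hx₀ (Iio_mem_nhds hεpos)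
    rw [Metric.mem_nhdsWithin_iff] at hev
    obtain ⟨δ, hδ, hball⟩ := hev
    obtain ⟨x, hxmem, hsup⟩ := hτadm x₀ hx₀ δ hδ
    have hsd : volume (symmDiff (Λ x) (Λ x₀)) < volume {y | y ∈ Λ x₀ ∧ τ x₀ ≤ τ y} :=
      hball hxmem
    have hsub : {y | y ∈ Λ x₀ ∧ τ x₀ ≤ τ y} ⊆ symmDiff (Λ x) (Λ x₀) := by
      rintro y ⟨hy1, hy2⟩
      rw [Set.symmDiff_def]
      refine Or.inr ⟨hy1, fun hyx => ?_⟩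
      have : τ y ≤ sSup (τ '' (Λ x ∩ Λ x₀)) :=
        le_csSup (hBdd x) (mem_image_of_mem τ ⟨hyx, hy1⟩)
      linarith
    exact absurd hsd (not_lt.2 (measure_mono hsub))
  -- hence a.e. on Λ x₀, τ y < τ x₀
  have hae : ∀ᵐ y ∂(volume.restrict (Λ x₀)), τ y < τ x₀ := by
    rw [ae_restrict_iff' (hΛmeas x₀ hx₀), ae_iff]
    refine measure_mono_null ?_ hN0
    intro y hy
    simp only [mem_setOf_eq, not_forall, not_lt] at hy ⊢
    exact ⟨hy.1, hy.2⟩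
  -- measurable extension of τ
  set g : (Fin N → ℝ) → ℝ := fun y => if y ∈ Ω then τ y else 0 with hgdef
  have hgmeas : Measurable g := by
    apply measurable_of_Iio
    intro c
    have : g ⁻¹' Iio c = {y | y ∈ Ω ∧ τ y < c} ∪ (if (0:ℝ) < c then Ωᶜ else ∅) := by
      ext y
      by_cases hy : y ∈ Ω <;> split_ifs with hc <;>
        simp [hgdef, hy, hc, mem_preimage, mem_Iio]
    rw [this]
    refine ((hopen c).measurableSet).union ?_
    split_ifs
    · exact hΩ.measurableSet.compl
    · exact MeasurableSet.empty
  -- the integrand functions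
  have hFmeas : ∀ L : ℝ, AEStronglyMeasurable
      (fun y => Real.exp (-L * τ x₀) * (Real.exp (L * τ y) * ζ y))
      (volume.restrict (Λ x₀)) := by
    intro L
    have h1 : Measurable (fun y => Real.exp (-L * τ x₀) * (Real.exp (L * g y) * ζ y)) :=
      measurable_const.mul ((Real.measurable_exp.comp (hgmeas.const_mul L)).mul hζmeas)
    refine h1.aestronglyMeasurable.congr ?_
    filter_upwards [ae_restrict_mem (hΛmeas x₀ hx₀)] with y hy
    simp only [hgdef, if_pos (hΛsub x₀ hx₀ hy)]
  have hζint : Integrable ζ (volume.restrict (Λ x₀)) :=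
    (hζloc K hKΩ hKc).mono_set hΛK
  have hprod : ∀ (L : ℝ) y, Real.exp (-L * τ x₀) * (Real.exp (L * τ y) * ζ y)
      = Real.exp (L * (τ y - τ x₀)) * ζ y := by
    intro L y
    rw [← mul_assoc, ← Real.exp_add]
    congr 1
    ring
  have key : Tendsto (fun L : ℝ => ∫ y in Λ x₀,
      Real.exp (-L * τ x₀) * (Real.exp (L * τ y) * ζ y)) atTop
      (nhds (∫ _ in Λ x₀, (0:ℝ))) := by
    apply tendsto_integral_filter_of_dominated_convergence (bound := ζ)
      (Eventually.of_forall hFmeas) ?_ hζint ?_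
    · -- bound
      filter_upwards [eventually_ge_atTop (0:ℝ)] with L hL
      filter_upwards [hae] with y hy
      rw [hprod, Real.norm_eq_abs, abs_of_nonneg (mul_nonneg (Real.exp_pos _).le (hζpos y))]
      have h2 : Real.exp (L * (τ y - τ x₀)) ≤ 1 :=
        Real.exp_le_one_iff.2 (mul_nonpos_of_nonneg_of_nonpos hL (by linarith))
      calc Real.exp (L * (τ y - τ x₀)) * ζ y ≤ 1 * ζ y :=
            mul_le_mul_of_nonneg_right h2 (hζpos y)
        _ = ζ y := one_mul _
    · -- pointwise limit
      filter_upwards [hae] with y hy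
      have hc : τ y - τ x₀ < 0 := by linarith
      have h1 : Tendsto (fun L : ℝ => L * (τ y - τ x₀)) atTop atBot :=
        tendsto_id.atTop_mul_const_of_neg hc
      have h3 := (Real.tendsto_exp_atBot.comp h1).mul_const (ζ y)
      rw [zero_mul] at h3
      refine h3.congr fun L => ?_
      simp only [Function.comp_apply]
      rw [hprod]
  rw [integral_zero] at key
  have : (fun L : ℝ => Real.exp (-L * τ x₀) * ∫ y in Λ x₀, Real.exp (L * τ y) * ζ y)
      = fun L : ℝ => ∫ y in Λ x₀, Real.exp (-L * τ x₀) * (Real.exp (L * τ y) * ζ y) := by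
    funext L
    rw [integral_const_mul]
  rw [this]
  exact key
end

section
/- Let Ω ⊆ ℝ^N be open, E a Banach space, and Λ as in the standing hypotheses, admitting a Λ-invariant exhaustion (Ωₙ). Let the kernel k satisfy conditions (k1) and (k2). Then for every w ∈ L¹_loc(Ω,E) the formula V(w)(x) := ∫_{Λ(x)} k(x,y) w(y) dy defines a continuous function V(w) : Ω → E. -/
/-!
Fix `x₀ ∈ Ω` and an exhaustion set `Ωₙ ∋ x₀`. For `x ∈ Ωₙ` invariance gives `Λ(x) ⊆ C := closure Ωₙ`,
a compact subset of `Ω`, so `V(w)(x)` is the integral over `C` of `1_{Λ(x)} k(x, ·) w`. On `C` the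
function `w` is integrable, and Hölder's inequality (`L^∞ × L¹ → L¹`) bounds `‖V(w)(x) - V(w)(x₀)‖` by
`‖1_{Λ(x)} k(x, ·) - 1_{Λ(x₀)} k(x₀, ·)‖_{L^∞(C)} ‖w‖_{L¹(C)}`, which tends to `0` by (k2).
-/

open MeasureTheory Set Filter Bornology Topology

namespace MeasureTheory

variable {α E F : Type*} [MeasurableSpace α] {μ : Measure α}
  [NormedAddCommGroup E] [NormedSpace ℝ E] [NormedAddCommGroup F] [NormedSpace ℝ F]

theorem MemLp.integrable_clm_apply {K : α → E →L[ℝ] F} {w : α → E} (hK : MemLp K ⊤ μ)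
    (hw : Integrable w μ) : Integrable (fun y => K y (w y)) μ :=
  memLp_one_iff_integrable.1 <|
    (ContinuousLinearMap.id ℝ (E →L[ℝ] F)).memLp_of_bilin 1 hK (memLp_one_iff_integrable.2 hw)

theorem eLpNorm_one_clm_apply_le (K : α → E →L[ℝ] F) {w : α → E} (hw : AEStronglyMeasurable w μ) :
    eLpNorm (fun y => K y (w y)) 1 μ ≤ eLpNorm K ⊤ μ * eLpNorm w 1 μ := by
  simpa using eLpNorm_le_eLpNorm_top_mul_eLpNorm 1 K hw (fun T v => T v) 1
    (ae_of_all _ fun y => by simpa using (K y).le_opNNNorm (w y))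

theorem tendsto_integral_clm_apply_of_tendsto_eLpNorm_top {ι : Type*} {l : Filter ι}
    {K : ι → α → E →L[ℝ] F} {K₀ : α → E →L[ℝ] F} {w : α → E}
    (hK : ∀ᶠ i in l, AEStronglyMeasurable (K i) μ) (hK₀ : MemLp K₀ ⊤ μ) (hw : Integrable w μ)
    (hlim : Tendsto (fun i => eLpNorm (K i - K₀) ⊤ μ) l (𝓝 0)) :
    Tendsto (fun i => ∫ y, K i y (w y) ∂μ) l (𝓝 (∫ y, K₀ y (w y) ∂μ)) := by
  have hdiff : ∀ᶠ i in l, MemLp (K i - K₀) ⊤ μ := by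
    filter_upwards [hK, hlim.eventually (gt_mem_nhds ENNReal.zero_lt_top)] with i hKi hi
    exact ⟨hKi.sub hK₀.1, hi⟩
  have hint : ∀ᶠ i in l, Integrable (fun y => K i y (w y)) μ := by
    filter_upwards [hdiff] with i hi
    have hKi : MemLp (K i) ⊤ μ := sub_add_cancel (K i) K₀ ▸ MemLp.add (ε := E →L[ℝ] F) hi hK₀
    exact hKi.integrable_clm_apply hw
  refine tendsto_integral_of_L1' _ (hK₀.integrable_clm_apply hw).1 hint ?_
  have hbound : ∀ i, eLpNorm ((fun y => K i y (w y)) - fun y => K₀ y (w y)) 1 μ ≤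
      eLpNorm (K i - K₀) ⊤ μ * eLpNorm w 1 μ := fun i => by
    convert eLpNorm_one_clm_apply_le (K i - K₀) hw.1 using 2
    ext y
    simp
  have hprod : Tendsto (fun i => eLpNorm (K i - K₀) ⊤ μ * eLpNorm w 1 μ) l (𝓝 0) := by
    simpa only [zero_mul] using
      ENNReal.Tendsto.mul_const hlim (Or.inr (memLp_one_iff_integrable.2 hw).2.ne)
  exact tendsto_of_tendsto_of_tendsto_of_le_of_le tendsto_const_nhds hprod (fun _ => zero_le)
    hbound

theorem setIntegral_clm_apply_eq_setIntegral_indicator {s t : Set α} (hs : MeasurableSet s)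
    (hst : s ⊆ t) (K : α → E →L[ℝ] F) (w : α → E) :
    ∫ y in s, K y (w y) ∂μ = ∫ y in t, s.indicator K y (w y) ∂μ := by
  have hind : (fun y => s.indicator K y (w y)) = s.indicator fun y => K y (w y) := by
    funext y
    by_cases hy : y ∈ s <;> simp [hy]
  rw [hind, setIntegral_indicator hs, inter_eq_right.2 hst]

end MeasureTheory

theorem stmt_8_general
    (N : ℕ) {E : Type*} [NormedAddCommGroup E] [NormedSpace ℝ E]
    (Ω : Set (Fin N → ℝ))
    (Λ : (Fin N → ℝ) → Set (Fin N → ℝ))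
    (hΛmeas : ∀ x ∈ Ω, MeasurableSet (Λ x))
    -- a Λ-invariant exhaustion (Ωₙ)
    (Ωseq : ℕ → Set (Fin N → ℝ))
    (hOopen : ∀ n, IsOpen (Ωseq n)) (hObdd : ∀ n, IsBounded (Ωseq n))
    (hOsub : ∀ n, closure (Ωseq n) ⊆ Ω)
    (hOcover : Ω ⊆ ⋃ n, Ωseq n)
    (hOinv : ∀ n, ∀ x ∈ Ωseq n, Λ x ⊆ Ωseq n)
    -- the kernel k with conditions (k1)-(k2)
    (k : (Fin N → ℝ) → (Fin N → ℝ) → (E →L[ℝ] E))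
    (hk1 : ∀ x ∈ Ω, AEStronglyMeasurable (k x) (volume.restrict (Λ x)) ∧
      eLpNorm (k x) ⊤ (volume.restrict (Λ x)) < ⊤)
    (hk2 : ∀ C ⊆ Ω, IsCompact C → ∀ x₀ ∈ Ω,
      Tendsto (fun x => eLpNorm
          (fun y => (Λ x).indicator (k x) y - (Λ x₀).indicator (k x₀) y)
          ⊤ (volume.restrict C))
        (nhdsWithin x₀ Ω) (nhds 0)) :
    -- conclusion: V(w) is continuous on Ω for every w ∈ L¹_loc(Ω,E)
    ∀ w : (Fin N → ℝ) → E, StronglyMeasurable w →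
      (∀ K ⊆ Ω, IsCompact K → IntegrableOn w K) →
      ContinuousOn (fun x => ∫ y in Λ x, (k x y) (w y)) Ω := by
  intro w _ hw x₀ hx₀
  obtain ⟨n, hx₀n⟩ := mem_iUnion.1 (hOcover hx₀)
  have hC : IsCompact (closure (Ωseq n)) := (hObdd n).isCompact_closure
  have hK : ∀ x ∈ Ω, MemLp ((Λ x).indicator (k x)) ⊤ (volume.restrict (closure (Ωseq n))) :=
    fun x hx =>
      ((memLp_indicator_iff_restrict (ε := E →L[ℝ] E) (hΛmeas x hx)).2 (hk1 x hx)).restrict _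
  have hV : ∀ x ∈ Ωseq n ∩ Ω, ∫ y in Λ x, k x y (w y) =
      ∫ y in closure (Ωseq n), (Λ x).indicator (k x) y (w y) := fun x hx =>
    setIntegral_clm_apply_eq_setIntegral_indicator (hΛmeas x hx.2)
      ((hOinv n x hx.1).trans subset_closure) _ _
  have hnear : ∀ᶠ x in 𝓝[Ω] x₀, x ∈ Ωseq n ∩ Ω :=
    inter_mem (mem_nhdsWithin_of_mem_nhds ((hOopen n).mem_nhds hx₀n)) self_mem_nhdsWithin
  refine Tendsto.congr' (hnear.mono fun x hx => (hV x hx).symm) ?_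
  show Tendsto _ _ (𝓝 (∫ y in Λ x₀, k x₀ y (w y)))
  rw [hV x₀ ⟨hx₀n, hx₀⟩]
  exact tendsto_integral_clm_apply_of_tendsto_eLpNorm_top (hnear.mono fun x hx => (hK x hx.2).1)
    (hK x₀ hx₀) (hw _ (hOsub n) hC) (hk2 _ (hOsub n) hC x₀ hx₀)

/-- Under the standing hypotheses on `Λ` (ρ-continuity, boundedness,
a Λ-invariant exhaustion) and the kernel conditions (k1)–(k2), for every
`w ∈ L¹_loc(Ω,E)` the Volterra integral `V(w)(x) := ∫_{Λ(x)} k(x,y) w(y) dy`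
defines a continuous function on `Ω`. -/
theorem stmt_8
    (N : ℕ) {E : Type*} [NormedAddCommGroup E] [NormedSpace ℝ E] [CompleteSpace E]
    (Ω : Set (Fin N → ℝ)) (hΩ : IsOpen Ω)
    (Λ : (Fin N → ℝ) → Set (Fin N → ℝ))
    (hΛsub : ∀ x ∈ Ω, Λ x ⊆ Ω)
    (hΛmeas : ∀ x ∈ Ω, MeasurableSet (Λ x))
    (hΛρ : ∀ x₀ ∈ Ω, Tendsto (fun x => volume (symmDiff (Λ x) (Λ x₀)))
      (nhdsWithin x₀ Ω) (nhds 0))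
    (hΛbdd : ∀ S ⊆ Ω, IsBounded S →
      IsCompact (closure (⋃ x ∈ S, Λ x)) ∧ closure (⋃ x ∈ S, Λ x) ⊆ Ω)
    -- a Λ-invariant exhaustion (Ωₙ)
    (Ωseq : ℕ → Set (Fin N → ℝ))
    (hOopen : ∀ n, IsOpen (Ωseq n)) (hObdd : ∀ n, IsBounded (Ωseq n))
    (hOsub : ∀ n, closure (Ωseq n) ⊆ Ω) (hOmono : ∀ n, Ωseq n ⊆ Ωseq (n + 1))
    (hOcover : Ω ⊆ ⋃ n, Ωseq n)
    (hOinv : ∀ n, ∀ x ∈ Ωseq n, Λ x ⊆ Ωseq n)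
    -- the kernel k with conditions (k1)-(k2)
    (k : (Fin N → ℝ) → (Fin N → ℝ) → (E →L[ℝ] E))
    (hk1 : ∀ x ∈ Ω, AEStronglyMeasurable (k x) (volume.restrict (Λ x)) ∧
      eLpNorm (k x) ⊤ (volume.restrict (Λ x)) < ⊤)
    (hk2 : ∀ C ⊆ Ω, IsCompact C → ∀ x₀ ∈ Ω,
      Tendsto (fun x => eLpNorm
          (fun y => (Λ x).indicator (k x) y - (Λ x₀).indicator (k x₀) y)
          ⊤ (volume.restrict C))
        (nhdsWithin x₀ Ω) (nhds 0)) :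
    -- conclusion: V(w) is continuous on Ω for every w ∈ L¹_loc(Ω,E)
    ∀ w : (Fin N → ℝ) → E, StronglyMeasurable w →
      (∀ K ⊆ Ω, IsCompact K → IntegrableOn w K) →
      ContinuousOn (fun x => ∫ y in Λ x, (k x y) (w y)) Ω :=
  stmt_8_general N Ω Λ hΛmeas Ωseq hOopen hObdd hOsub hOcover hOinv k hk1 hk2
end

section
/- Let Ω ⊆ ℝ^N be open, E a Banach space, and Λ as in the standing hypotheses, admitting a Λ-invariant exhaustion (Ωₙ). Let the kernel k satisfy conditions (k1) and (k2), and let V(w)(x) := ∫_{Λ(x)} k(x,y) w(y) dy. If w_k, w ∈ L¹_loc(Ω,E) and for every compact K ⊆ Ω one has ∫_K |w_k(y) − w(y)| dy → 0, then V(w_k) → V(w) uniformly on every compact subset of Ω. -/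
/-! Let `C` be the compact closure of `⋃_{x ∈ K} Λ(x)`. By (k2), `x ↦ 1_{Λ(x)} k(x,·)` is
continuous from `K` into `L^∞(C)`, so by compactness these kernels are bounded in `L^∞(C)` by
one constant `M`. Then `‖V(wⱼ)(x) − V(w₀)(x)‖ ≤ M ∫_C ‖wⱼ − w₀‖` for every `x ∈ K`, and the
right-hand side tends to `0`. -/

open MeasureTheory Set Filter Bornology

open scoped NNReal Topology

section KernelBounds

variable {X α E F : Type*} [TopologicalSpace X] [MeasurableSpace α] {μ : Measure α}
  [NormedAddCommGroup F]

lemma IsCompact.exists_eLpNorm_top_le {K : Set X} (hK : IsCompact K) {f : X → α → F}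
    (hfin : ∀ x ∈ K, eLpNorm (f x) ⊤ μ < ⊤)
    (hcont : ∀ x₀ ∈ K,
      Tendsto (fun x => eLpNorm (f x - f x₀) ⊤ μ) (𝓝[K] x₀) (𝓝 0)) :
    ∃ M : ℝ≥0, ∀ x ∈ K, eLpNorm (f x) ⊤ μ ≤ M := by
  refine hK.induction_on (p := fun t => ∃ M : ℝ≥0, ∀ x ∈ t, eLpNorm (f x) ⊤ μ ≤ M)
    ⟨0, by simp⟩ (fun s t hst ⟨M, hM⟩ => ⟨M, fun x hx => hM x (hst hx)⟩)
    (fun s t ⟨M, hM⟩ ⟨M', hM'⟩ => ⟨max M M', ?_⟩) fun x₀ hx₀ => ?_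
  · rintro x (hx | hx)
    · exact (hM x hx).trans (by gcongr; exact le_max_left _ _)
    · exact (hM' x hx).trans (by gcongr; exact le_max_right _ _)
  · refine ⟨_, (hcont x₀ hx₀).eventually (gt_mem_nhds zero_lt_one),
      1 + (eLpNorm (f x₀) ⊤ μ).toNNReal, fun x hx => ?_⟩
    calc eLpNorm (f x) ⊤ μ
        ≤ eLpNorm (f x - f x₀) ⊤ μ + eLpNorm (f x₀) ⊤ μ := by
          simpa only [eLpNorm_exponent_top, sub_add_cancel] using
            eLpNormEssSup_add_le (f := f x - f x₀) (g := f x₀) (μ := μ)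
      _ ≤ _ := by
          rw [ENNReal.coe_add, ENNReal.coe_toNNReal (hfin x₀ hx₀).ne]
          gcongr
          exact le_of_lt hx

lemma ae_restrict_norm_le_of_eLpNorm_indicator_le {s t : Set α} (hs : MeasurableSet s)
    (hst : s ⊆ t) {f : α → F} {M : ℝ≥0} (hM : eLpNorm (s.indicator f) ⊤ (μ.restrict t) ≤ M) :
    ∀ᵐ y ∂μ.restrict s, ‖f y‖ ≤ M := by
  rw [eLpNorm_indicator_eq_eLpNorm_restrict hs, Measure.restrict_restrict_of_subset hst,
    eLpNorm_exponent_top] at hM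
  filter_upwards [ae_le_eLpNormEssSup (f := f) (μ := μ.restrict s)] with y hy
  exact NNReal.coe_le_coe.2 (enorm_le_coe.1 (hy.trans hM))

variable [NormedAddCommGroup E] [NormedSpace ℝ E] [NormedSpace ℝ F]

lemma Integrable.clm_apply_of_memLp_top {κ : α → E →L[ℝ] F} {v : α → E}
    (hκ : MemLp κ ⊤ μ) (hv : Integrable v μ) : Integrable (fun y => κ y (v y)) μ := by
  rw [← memLp_one_iff_integrable]
  exact hκ.of_bilin (r := 1) (fun L u => L u) 1 (memLp_one_iff_integrable.2 hv)
    (isBoundedBilinearMap_apply.continuous.comp_aestronglyMeasurable (hκ.1.prodMk hv.1))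
    (Eventually.of_forall fun y => by simpa using (κ y).le_opNNNorm (v y))

lemma norm_setIntegral_clm_apply_le {κ : α → E →L[ℝ] F} {v : α → E} {s t : Set α}
    (hst : s ⊆ t) {M : ℝ≥0} (hκ : ∀ᵐ y ∂μ.restrict s, ‖κ y‖ ≤ M) (hv : IntegrableOn v t μ) :
    ‖∫ y in s, κ y (v y) ∂μ‖ ≤ M * ∫ y in t, ‖v y‖ ∂μ :=
  calc ‖∫ y in s, κ y (v y) ∂μ‖ ≤ ∫ y in s, M * ‖v y‖ ∂μ :=
        norm_integral_le_of_norm_le ((hv.mono_set hst).norm.const_mul M) <| by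
          filter_upwards [hκ] with y hy
          exact (κ y).le_of_opNorm_le hy (v y)
    _ = M * ∫ y in s, ‖v y‖ ∂μ := integral_const_mul _ _
    _ ≤ M * ∫ y in t, ‖v y‖ ∂μ := mul_le_mul_of_nonneg_left
        (setIntegral_mono_set hv.norm (.of_forall fun y => norm_nonneg _) hst.eventuallyLE)
        M.coe_nonneg

end KernelBounds

lemma tendstoUniformlyOn_of_dist_le {ι β γ : Type*} [PseudoMetricSpace γ] {F : ι → β → γ}
    {f : β → γ} {p : Filter ι} {s : Set β} {b : ι → ℝ} (hb : Tendsto b p (𝓝 0))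
    (h : ∀ᶠ i in p, ∀ x ∈ s, dist (f x) (F i x) ≤ b i) : TendstoUniformlyOn F f p s :=
  Metric.tendstoUniformlyOn_iff.2 fun ε hε => by
    filter_upwards [h, hb.eventually (gt_mem_nhds hε)] with i hi hbi x hx
    exact (hi x hx).trans_lt hbi

theorem stmt_9_general
    (N : ℕ) {E : Type*} [NormedAddCommGroup E] [NormedSpace ℝ E]
    (Ω : Set (Fin N → ℝ))
    (Λ : (Fin N → ℝ) → Set (Fin N → ℝ))
    (hΛmeas : ∀ x ∈ Ω, MeasurableSet (Λ x))
    (hΛbdd : ∀ S ⊆ Ω, IsBounded S →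
      IsCompact (closure (⋃ x ∈ S, Λ x)) ∧ closure (⋃ x ∈ S, Λ x) ⊆ Ω)
    -- the kernel k with conditions (k1)-(k2)
    (k : (Fin N → ℝ) → (Fin N → ℝ) → (E →L[ℝ] E))
    (hk1 : ∀ x ∈ Ω, AEStronglyMeasurable (k x) (volume.restrict (Λ x)) ∧
      eLpNorm (k x) ⊤ (volume.restrict (Λ x)) < ⊤)
    (hk2 : ∀ C ⊆ Ω, IsCompact C → ∀ x₀ ∈ Ω,
      Tendsto (fun x => eLpNorm
          (fun y => (Λ x).indicator (k x) y - (Λ x₀).indicator (k x₀) y)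
          ⊤ (volume.restrict C))
        (nhdsWithin x₀ Ω) (nhds 0))
    -- the sequence wⱼ and its limit w₀ in L¹_loc(Ω,E)
    (w : ℕ → (Fin N → ℝ) → E) (w₀ : (Fin N → ℝ) → E)
    (hwloc : ∀ j, ∀ K ⊆ Ω, IsCompact K → IntegrableOn (w j) K)
    (hw₀loc : ∀ K ⊆ Ω, IsCompact K → IntegrableOn w₀ K)
    -- wⱼ → w₀ in L¹_loc : ∫_K |wⱼ − w₀| → 0 for every compact K ⊆ Ω
    (hconv : ∀ K ⊆ Ω, IsCompact K →
      Tendsto (fun j => ∫ y in K, ‖w j y - w₀ y‖) atTop (nhds 0)) :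
    -- conclusion: V(wⱼ) → V(w₀) uniformly on every compact subset of Ω
    ∀ K ⊆ Ω, IsCompact K →
      TendstoUniformlyOn (fun j x => ∫ y in Λ x, (k x y) (w j y))
        (fun x => ∫ y in Λ x, (k x y) (w₀ y)) atTop K := by
  intro K hKΩ hK
  obtain ⟨hC, hCΩ⟩ := hΛbdd K hKΩ hK.isBounded
  set C := closure (⋃ x ∈ K, Λ x)
  have hΛC : ∀ x ∈ K, Λ x ⊆ C := fun x hx => (subset_biUnion_of_mem hx).trans subset_closure
  obtain ⟨M, hM⟩ := hK.exists_eLpNorm_top_le (f := fun x => (Λ x).indicator (k x))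
    (fun x hx => (eLpNorm_mono_measure _ Measure.restrict_le_self).trans_lt <| by
      rw [eLpNorm_indicator_eq_eLpNorm_restrict (ε := E →L[ℝ] E) (hΛmeas x (hKΩ hx))]
      exact (hk1 x (hKΩ hx)).2)
    fun x₀ hx₀ => (hk2 C hCΩ hC x₀ (hKΩ hx₀)).mono_left (nhdsWithin_mono _ hKΩ)
  have hV : ∀ x ∈ K, ∀ u, IntegrableOn u C →
      IntegrableOn (fun y => k x y (u y)) (Λ x) :=
    fun x hx u hu =>
      Integrable.clm_apply_of_memLp_top (hk1 x (hKΩ hx)) (hu.mono_set (hΛC x hx))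
  have hbound : ∀ x ∈ K, ∀ u, IntegrableOn u C →
      ‖∫ y in Λ x, k x y (u y)‖ ≤ M * ∫ y in C, ‖u y‖ := fun x hx u hu =>
    norm_setIntegral_clm_apply_le (hΛC x hx)
      (ae_restrict_norm_le_of_eLpNorm_indicator_le (hΛmeas x (hKΩ hx)) (hΛC x hx) (hM x hx)) hu
  have hwj := fun j => hwloc j C hCΩ hC
  have hw₀ := hw₀loc C hCΩ hC
  refine tendstoUniformlyOn_of_dist_le (b := fun j => M * ∫ y in C, ‖w j y - w₀ y‖)
    (by simpa using (hconv C hCΩ hC).const_mul (M : ℝ)) (.of_forall fun j x hx => ?_)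
  rw [dist_comm, dist_eq_norm, ← integral_sub (hV x hx _ (hwj j)) (hV x hx _ hw₀)]
  simpa only [Pi.sub_apply, map_sub] using hbound x hx _ ((hwj j).sub hw₀)

/-- continuity of the Volterra operator `V` from `L¹_loc(Ω,E)` to
`C(Ω,E)`: under the standing hypotheses on `Λ` and (k1)-(k2), if `∫_K ‖wⱼ − w₀‖ → 0`
for every compact `K ⊆ Ω`, then `V(wⱼ) → V(w₀)` uniformly on compact subsets of `Ω`. -/
theorem stmt_9
    (N : ℕ) {E : Type*} [NormedAddCommGroup E] [NormedSpace ℝ E] [CompleteSpace E]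
    (Ω : Set (Fin N → ℝ)) (hΩ : IsOpen Ω)
    (Λ : (Fin N → ℝ) → Set (Fin N → ℝ))
    (hΛsub : ∀ x ∈ Ω, Λ x ⊆ Ω)
    (hΛmeas : ∀ x ∈ Ω, MeasurableSet (Λ x))
    (hΛρ : ∀ x₀ ∈ Ω, Tendsto (fun x => volume (symmDiff (Λ x) (Λ x₀)))
      (nhdsWithin x₀ Ω) (nhds 0))
    (hΛbdd : ∀ S ⊆ Ω, IsBounded S →
      IsCompact (closure (⋃ x ∈ S, Λ x)) ∧ closure (⋃ x ∈ S, Λ x) ⊆ Ω)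
    -- a Λ-invariant exhaustion (Ωₙ)
    (Ωseq : ℕ → Set (Fin N → ℝ))
    (hOopen : ∀ n, IsOpen (Ωseq n)) (hObdd : ∀ n, IsBounded (Ωseq n))
    (hOsub : ∀ n, closure (Ωseq n) ⊆ Ω) (hOmono : ∀ n, Ωseq n ⊆ Ωseq (n + 1))
    (hOcover : Ω ⊆ ⋃ n, Ωseq n)
    (hOinv : ∀ n, ∀ x ∈ Ωseq n, Λ x ⊆ Ωseq n)
    -- the kernel k with conditions (k1)-(k2)
    (k : (Fin N → ℝ) → (Fin N → ℝ) → (E →L[ℝ] E))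
    (hk1 : ∀ x ∈ Ω, AEStronglyMeasurable (k x) (volume.restrict (Λ x)) ∧
      eLpNorm (k x) ⊤ (volume.restrict (Λ x)) < ⊤)
    (hk2 : ∀ C ⊆ Ω, IsCompact C → ∀ x₀ ∈ Ω,
      Tendsto (fun x => eLpNorm
          (fun y => (Λ x).indicator (k x) y - (Λ x₀).indicator (k x₀) y)
          ⊤ (volume.restrict C))
        (nhdsWithin x₀ Ω) (nhds 0))
    -- the sequence wⱼ and its limit w₀ in L¹_loc(Ω,E)
    (w : ℕ → (Fin N → ℝ) → E) (w₀ : (Fin N → ℝ) → E)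
    (hwmeas : ∀ j, StronglyMeasurable (w j)) (hw₀meas : StronglyMeasurable w₀)
    (hwloc : ∀ j, ∀ K ⊆ Ω, IsCompact K → IntegrableOn (w j) K)
    (hw₀loc : ∀ K ⊆ Ω, IsCompact K → IntegrableOn w₀ K)
    -- wⱼ → w₀ in L¹_loc : ∫_K |wⱼ − w₀| → 0 for every compact K ⊆ Ω
    (hconv : ∀ K ⊆ Ω, IsCompact K →
      Tendsto (fun j => ∫ y in K, ‖w j y - w₀ y‖) atTop (nhds 0)) :
    -- conclusion: V(wⱼ) → V(w₀) uniformly on every compact subset of Ω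
    ∀ K ⊆ Ω, IsCompact K →
      TendstoUniformlyOn (fun j x => ∫ y in Λ x, (k x y) (w j y))
        (fun x => ∫ y in Λ x, (k x y) (w₀ y)) atTop K :=
  stmt_9_general N Ω Λ hΛmeas hΛbdd k hk1 hk2 w w₀ hwloc hw₀loc hconv
end

section
/- Let Ω ⊆ ℝ^N be open and E a reflexive Banach space. Let F : Ω × E ⊸ E be a set-valued map satisfying conditions (F1)–(F4). Then for every continuous u : Ω → E there exists a locally Bochner-integrable w : Ω → E with w(x) ∈ F(x,u(x)) for Lebesgue-a.e. x ∈ Ω; that is, the Nemytskii set N_F(u) := {w ∈ L¹_loc(Ω,E) : w(x) ∈ F(x,u(x)) a.e.} is nonempty. -/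
/-!
Approximate `u` by simple functions `vₙ → u` on `Ω` and use (F2) to get strongly measurable
`wₙ(x) ∈ F(x, vₙ(x))`. For a.e. `x` the sequence `wₙ(x)` is bounded by (F4), so in the reflexive
space `E` the decreasing closed convex sets `Cₘ(x) = cl conv {wₙ(x) : n ≥ m}` are weakly compact and
`G(x) = ⋂ₘ Cₘ(x)` is nonempty; separating a point of `G(x)` from `F(x, u(x))` by a functional
contradicts the upper hemicontinuity (F3), so `G(x) ⊆ F(x, u(x))`. Weak compactness also gives
`d(e, G(x)) = supₘ d(e, Cₘ(x))`, and the distance to the convex hull of finitely many points depends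
continuously on the points, so `x ↦ d(e, G(x))` is measurable. A Kuratowski–Ryll-Nardzewski
construction then selects `g(x) ∈ G(x)` measurably, and (F4) makes `g` locally integrable.
-/

open MeasureTheory Set Filter Metric Topology

section Reflexive

variable {E : Type*} [NormedAddCommGroup E] [NormedSpace ℝ E]

theorem nonempty_iInter_of_reflexive
    (hrefl : Function.Surjective (NormedSpace.inclusionInDoubleDual ℝ E)) {K : ℕ → Set E}
    (hK : Antitone K) (hne : ∀ m, (K m).Nonempty) (hcl : ∀ m, IsClosed (K m))
    (hconv : ∀ m, Convex ℝ (K m)) (hbd : Bornology.IsBounded (K 0)) :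
    (⋂ m, K m).Nonempty := by
  -- closed convex sets are weakly closed, bounded ones are relatively weakly compact
  let K' : ℕ → Set (WeakSpace ℝ E) := fun m => toWeakSpace ℝ E '' K m
  have hK'cl : ∀ m, IsClosed (K' m) := fun m => by
    have h := (hconv m).toWeakSpace_closure ℝ
    rw [(hcl m).closure_eq] at h
    change IsClosed (toWeakSpace ℝ E '' K m)
    rw [h]
    exact isClosed_closure
  have hK'0 : IsCompact (K' 0) := by
    refine (NormedSpace.isCompact_closure_of_isBounded ℝ E (K' 0) ?_ ?_).of_isClosed_subset
      (hK'cl 0) subset_closure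
    · rwa [preimage_image_eq _ (toWeakSpace ℝ E).injective]
    · rintro Ψ -
      obtain ⟨y, hy⟩ := hrefl (StrongDual.toWeakDual.symm Ψ)
      exact ⟨toWeakSpace ℝ E y, by simp [NormedSpace.inclusionInDoubleDualWeak, hy]⟩
  obtain ⟨y, hy⟩ := IsCompact.nonempty_iInter_of_sequence_nonempty_isCompact_isClosed K'
    (fun m => image_mono (hK m.le_succ)) (fun m => (hne m).image _) hK'0 hK'cl
  refine ⟨(toWeakSpace ℝ E).symm y, mem_iInter.2 fun m => ?_⟩
  obtain ⟨z, hz, rfl⟩ := mem_iInter.1 hy m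
  simpa using hz

theorem infEDist_iInter_of_reflexive
    (hrefl : Function.Surjective (NormedSpace.inclusionInDoubleDual ℝ E)) {K : ℕ → Set E}
    (hK : Antitone K) (hcl : ∀ m, IsClosed (K m)) (hconv : ∀ m, Convex ℝ (K m)) (e : E) :
    infEDist e (⋂ m, K m) = ⨆ m, infEDist e (K m) := by
  refine le_antisymm ?_ (iSup_le fun m => infEDist_anti (iInter_subset K m))
  refine ENNReal.le_of_forall_pos_le_add fun ε hε hlt => ?_
  set r : ℝ := (⨆ m, infEDist e (K m)).toReal + ε with hr_def
  have hr_eq : ENNReal.ofReal r = (⨆ m, infEDist e (K m)) + ε := by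
    rw [hr_def, ENNReal.ofReal_add ENNReal.toReal_nonneg ε.coe_nonneg,
      ENNReal.ofReal_toReal hlt.ne, ENNReal.ofReal_coe_nnreal]
  have hr : ∀ m, (K m ∩ closedBall e r).Nonempty := fun m => by
    have hlt_r : infEDist e (K m) < ENNReal.ofReal r := hr_eq ▸
      (le_iSup (fun m => infEDist e (K m)) m).trans_lt
        (ENNReal.lt_add_right hlt.ne (by simpa using hε.ne'))
    obtain ⟨y, hy, hey⟩ := infEDist_lt_iff.1 hlt_r
    exact ⟨y, hy, mem_closedBall'.2 (edist_lt_ofReal.1 hey).le⟩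
  obtain ⟨y, hy⟩ := nonempty_iInter_of_reflexive hrefl
    (fun m n h => inter_subset_inter_left _ (hK h)) hr
    (fun m => (hcl m).inter isClosed_closedBall)
    (fun m => (hconv m).inter (convex_closedBall _ _))
    (isBounded_closedBall.subset inter_subset_right)
  calc infEDist e (⋂ m, K m) ≤ edist e y :=
        infEDist_le_edist_of_mem (iInter_mono (fun m => inter_subset_left) hy)
    _ ≤ ENNReal.ofReal r :=
        (edist_le_ofReal (by positivity)).2 (mem_closedBall'.1 (mem_iInter.1 hy 0).2)
    _ = (⨆ m, infEDist e (K m)) + ε := hr_eq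

end Reflexive

theorem MeasureTheory.StronglyMeasurable.pi_fin {X β : Type*} [MeasurableSpace X]
    [TopologicalSpace β] {n : ℕ} {f : Fin n → X → β} (hf : ∀ i, StronglyMeasurable (f i)) :
    StronglyMeasurable fun x i => f i x := by
  induction n with
  | zero => exact .of_subsingleton_cod
  | succ n ih =>
    have hcons : Continuous fun p : β × (Fin n → β) => (Fin.cons p.1 p.2 : Fin (n + 1) → β) :=
      continuous_fst.finCons (A := fun _ => β) continuous_snd
    convert hcons.comp_stronglyMeasurable ((hf 0).prodMk (ih fun i => hf i.succ)) with x i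
    cases i using Fin.cases <;> simp

theorem MeasureTheory.SimpleFunc.stronglyMeasurable_bind {X β γ : Type*} [MeasurableSpace X]
    [TopologicalSpace γ] (v : SimpleFunc X β) {s : β → X → γ}
    (hs : ∀ b, StronglyMeasurable (s b)) :
    StronglyMeasurable fun x => s (v x) x :=
  ⟨fun n => v.bind fun b => (hs b).approx n, fun x => by
    simpa only [SimpleFunc.bind_apply] using (hs (v x)).tendsto_approx x⟩

theorem ContinuousOn.stronglyMeasurable_piecewise {α β : Type*} [TopologicalSpace α]
    [MeasurableSpace α] [OpensMeasurableSpace α] [SecondCountableTopology α] [TopologicalSpace β]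
    [TopologicalSpace.PseudoMetrizableSpace β] {f g : α → β} {s : Set α}
    [∀ x, Decidable (x ∈ s)] (hf : ContinuousOn f s) (hg : ContinuousOn g sᶜ)
    (hs : MeasurableSet s) : StronglyMeasurable (s.piecewise f g) := by
  have : s.piecewise f g = fun x => if hx : x ∈ s then f (⟨x, hx⟩ : s)
      else g (⟨x, hx⟩ : (sᶜ : Set α)) := by
    ext x
    by_cases hx : x ∈ s <;> simp [hx]
  rw [this]
  exact .dite (continuousOn_iff_continuous_domRestrict.1 hf).stronglyMeasurable
    (continuousOn_iff_continuous_domRestrict.1 hg).stronglyMeasurable hs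

section ConvexHull

variable {E : Type*} [NormedAddCommGroup E] [NormedSpace ℝ E]

theorem exists_dist_le_of_mem_convexHull_range {ι : Type*} [Fintype ι] {y y' : ι → E} {z : E}
    (hz : z ∈ convexHull ℝ (range y)) :
    ∃ z' ∈ convexHull ℝ (range y'), dist z z' ≤ dist y y' := by
  -- project the convex hull of the pairs `(y i, y' i)` to both factors and to their difference
  let p : ι → E × E := fun i => (y i, y' i)
  have himage : ∀ f : E × E →ₗ[ℝ] E,
      convexHull ℝ (range (f ∘ p)) = f '' convexHull ℝ (range p) := fun f => by
    rw [range_comp, f.image_convexHull]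
  obtain ⟨q, hq, rfl⟩ : z ∈ LinearMap.fst ℝ E E '' convexHull ℝ (range p) :=
    himage (LinearMap.fst ℝ E E) ▸ hz
  refine ⟨q.2, himage (LinearMap.snd ℝ E E) ▸ mem_image_of_mem _ hq, ?_⟩
  have hdiff : q.1 - q.2 ∈ convexHull ℝ (range fun i => y i - y' i) :=
    himage (LinearMap.fst ℝ E E - LinearMap.snd ℝ E E) ▸ mem_image_of_mem _ hq
  have hball : convexHull ℝ (range fun i => y i - y' i) ⊆ closedBall 0 (dist y y') :=
    convexHull_min (range_subset_iff.2 fun i => by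
      simpa [← dist_eq_norm] using dist_le_pi_dist y y' i) (convex_closedBall _ _)
  simpa [dist_eq_norm] using hball hdiff

theorem continuous_infEDist_convexHull_range {ι : Type*} [Fintype ι] (e : E) :
    Continuous fun y : ι → E => infEDist e (convexHull ℝ (range y)) := by
  refine continuous_of_le_add_edist 1 ENNReal.one_ne_top fun y y' => ?_
  rw [one_mul]
  refine infEDist_le_infEDist_add_hausdorffEDist.trans (add_le_add_right ?_ _)
  refine hausdorffEDist_le_of_mem_edist (fun z hz => ?_) (fun z hz => ?_)
  · obtain ⟨z', hz', h⟩ := exists_dist_le_of_mem_convexHull_range hz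
    rw [dist_comm y'] at h
    exact ⟨z', hz', by simpa only [edist_dist] using ENNReal.ofReal_le_ofReal h⟩
  · obtain ⟨z', hz', h⟩ := exists_dist_le_of_mem_convexHull_range hz
    exact ⟨z', hz', by simpa only [edist_dist] using ENNReal.ofReal_le_ofReal h⟩

theorem convexHull_range_eq_iUnion_fin (g : ℕ → E) :
    convexHull ℝ (range g) = ⋃ n, convexHull ℝ (range fun i : Fin n => g i) := by
  have hmono : Monotone fun n => convexHull ℝ (range fun i : Fin n => g i) := fun n n' h =>
    convexHull_mono (range_subset_iff.2 fun i => ⟨⟨i, i.2.trans_le h⟩, rfl⟩)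
  refine subset_antisymm (convexHull_min (range_subset_iff.2 fun k => ?_)
    (hmono.directed_le.convex_iUnion fun n => convex_convexHull ℝ _))
    (iUnion_subset fun n => convexHull_mono (range_subset_iff.2 fun i => mem_range_self _))
  exact mem_iUnion.2 ⟨k + 1, subset_convexHull ℝ _ ⟨⟨k, k.lt_add_one⟩, rfl⟩⟩

theorem measurable_infEDist_convexHull_range {X : Type*} [MeasurableSpace X] {f : ℕ → X → E}
    (hf : ∀ n, StronglyMeasurable (f n)) (e : E) :
    Measurable fun x => infEDist e (convexHull ℝ (range fun n => f n x)) := by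
  simp_rw [convexHull_range_eq_iUnion_fin, infEDist_iUnion]
  exact .iInf fun n => ((continuous_infEDist_convexHull_range e).comp_stronglyMeasurable
    (StronglyMeasurable.pi_fin fun i => hf i)).measurable

end ConvexHull

section Selection

variable {X E : Type*} [MeasurableSpace X]

theorem exists_measurable_index_mem {A : ℕ → Set X} (hA : ∀ k, MeasurableSet (A k)) :
    ∃ idx : X → ℕ, Measurable idx ∧ ∀ x ∈ ⋃ k, A k, x ∈ A (idx x) := by
  classical
  have hp : ∀ x, ∃ k, x ∈ A k ∨ x ∉ ⋃ k, A k := fun x => by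
    by_cases hx : x ∈ ⋃ k, A k
    · obtain ⟨k, hk⟩ := mem_iUnion.1 hx
      exact ⟨k, .inl hk⟩
    · exact ⟨0, .inr hx⟩
  exact ⟨fun x => Nat.find (hp x), measurable_find hp fun k => (hA k).union (.compl (.iUnion hA)),
    fun x hx => (Nat.find_spec (hp x)).resolve_right (not_not.2 hx)⟩

variable [MetricSpace E]

theorem exists_measurable_index_near {G : X → Set E} {ev : ℕ → E}
    (hGev : ∀ x, G x ⊆ closure (range ev)) (hne : ∀ x, (G x).Nonempty)
    (hmeas : ∀ k, Measurable fun x => infEDist (ev k) (G x)) {φ : X → ℕ} (hφ : Measurable φ)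
    {r ε : ℝ} (hr : ∀ x, infDist (ev (φ x)) (G x) < r) (hε : 0 < ε) :
    ∃ ψ : X → ℕ, Measurable ψ ∧
      ∀ x, infDist (ev (ψ x)) (G x) < ε ∧ dist (ev (ψ x)) (ev (φ x)) < r + ε := by
  obtain ⟨ψ, hψ, h⟩ := exists_measurable_index_mem
    (A := fun k => {x | infDist (ev k) (G x) < ε ∧ dist (ev k) (ev (φ x)) < r + ε})
    fun k => (measurableSet_lt (hmeas k).ennreal_toReal measurable_const).inter
      (measurableSet_lt ((measurable_from_nat (f := fun i => dist (ev k) (ev i))).comp hφ)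
        measurable_const)
  refine ⟨ψ, hψ, fun x => h x (mem_iUnion.2 ?_)⟩
  obtain ⟨y, hy, hφy⟩ := (infDist_lt_iff (hne x)).1 (hr x)
  obtain ⟨k, hk⟩ := mem_closure_range_iff.1 (hGev x hy) ε hε
  refine ⟨k, (infDist_le_dist_of_mem hy).trans_lt (by rwa [dist_comm]), ?_⟩
  linarith [dist_triangle (ev k) y (ev (φ x)), dist_comm (ev k) y, dist_comm (ev (φ x)) y]

theorem exists_stronglyMeasurable_forall_mem_of_subset_closure_range [CompleteSpace E]
    {G : X → Set E} (ev : ℕ → E) (hGev : ∀ x, G x ⊆ closure (range ev))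
    (hcl : ∀ x, IsClosed (G x)) (hne : ∀ x, (G x).Nonempty)
    (hmeas : ∀ k, Measurable fun x => infEDist (ev k) (G x)) :
    ∃ g : X → E, StronglyMeasurable g ∧ ∀ x, g x ∈ G x := by
  obtain ⟨φ₀, hφ₀, h₀⟩ : ∃ φ₀ : X → ℕ, Measurable φ₀ ∧ ∀ x, infDist (ev (φ₀ x)) (G x) < 1 := by
    obtain ⟨φ₀, hφ₀, h⟩ := exists_measurable_index_mem
      (A := fun k => {x | infDist (ev k) (G x) < 1}) fun k => measurableSet_lt (hmeas k).ennreal_toReal measurable_const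
    refine ⟨φ₀, hφ₀, fun x => h x (mem_iUnion.2 ?_)⟩
    obtain ⟨y, hy⟩ := hne x
    obtain ⟨k, hk⟩ := mem_closure_range_iff.1 (hGev x hy) 1 one_pos
    exact ⟨k, (infDist_le_dist_of_mem hy).trans_lt (by rwa [dist_comm])⟩
  -- `ev (φ j x)` lies within `2⁻ʲ` of `G x` and within `2⁻ʲ + 2⁻ʲ⁻¹` of its predecessor
  choose! next hnext_meas hnext using fun (j : ℕ) (φ : X → ℕ) (hφ : Measurable φ)
    (hφG : ∀ x, infDist (ev (φ x)) (G x) < (1 / 2) ^ j) =>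
    exists_measurable_index_near hGev hne hmeas hφ hφG (pow_pos one_half_pos (j + 1))
  let φ : ℕ → X → ℕ := fun j => Nat.rec φ₀ next j
  have hφ : ∀ j, Measurable (φ j) ∧ ∀ x, infDist (ev (φ j x)) (G x) < (1 / 2) ^ j := by
    intro j
    induction j with
    | zero => simpa using ⟨hφ₀, h₀⟩
    | succ j ih => exact ⟨hnext_meas j _ ih.1 ih.2, fun x => (hnext j _ ih.1 ih.2 x).1⟩
  have hcauchy : ∀ x, CauchySeq fun j => ev (φ j x) := fun x =>
    cauchySeq_of_le_geometric (1 / 2) 2 one_half_lt_one fun j => by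
      have h : dist (ev (φ (j + 1) x)) (ev (φ j x)) < (1 / 2) ^ j + (1 / 2) ^ (j + 1) :=
        (hnext j _ (hφ j).1 (hφ j).2 x).2
      rw [pow_succ] at h
      rw [dist_comm]
      linarith [pow_pos (one_half_pos (α := ℝ)) j]
  choose g hg using fun x => cauchySeq_tendsto_of_complete (hcauchy x)
  refine ⟨g, stronglyMeasurable_of_tendsto _ (fun j => ?_) (tendsto_pi_nhds.2 hg), fun x => ?_⟩
  · exact continuous_of_discreteTopology.comp_stronglyMeasurable (hφ j).1.stronglyMeasurable
  · rw [(hcl x).mem_iff_infDist_zero (hne x)]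
    refine le_antisymm (le_of_tendsto_of_tendsto'
      (((continuous_infDist_pt _).tendsto _).comp (hg x))
      (tendsto_pow_atTop_nhds_zero_of_lt_one one_half_pos.le one_half_lt_one)
      fun j => ((hφ j).2 x).le) infDist_nonneg

theorem exists_stronglyMeasurable_forall_mem [Nonempty E] [CompleteSpace E] {G : X → Set E}
    {S : Set X} {V : Set E} (hS : MeasurableSet S) (hV : TopologicalSpace.IsSeparable V)
    (hGV : ∀ x ∈ S, G x ⊆ V) (hcl : ∀ x ∈ S, IsClosed (G x)) (hne : ∀ x ∈ S, (G x).Nonempty)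
    (hmeas : ∀ e, Measurable fun x => infEDist e (G x)) :
    ∃ g : X → E, StronglyMeasurable g ∧ ∀ x ∈ S, g x ∈ G x := by
  classical
  obtain ⟨c, hc, hVc⟩ := hV
  obtain ⟨ev, hev⟩ := (hc.insert (Classical.arbitrary E)).exists_eq_range (insert_nonempty _ _)
  obtain ⟨g, hg, hgG⟩ := exists_stronglyMeasurable_forall_mem_of_subset_closure_range
    (G := fun x => if x ∈ S then G x else {ev 0}) ev
    (fun x => by
      split_ifs with hx
      · exact (hGV x hx).trans (hVc.trans (closure_mono (hev ▸ subset_insert _ _)))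
      · exact singleton_subset_iff.2 (subset_closure (mem_range_self 0)))
    (fun x => by split_ifs with hx; exacts [hcl x hx, isClosed_singleton])
    (fun x => by split_ifs with hx; exacts [hne x hx, singleton_nonempty _])
    (fun k => by simp only [apply_ite (infEDist (ev k))]; exact (hmeas _).ite hS measurable_const)
  exact ⟨g, hg, fun x hx => by simpa [hx] using hgG x⟩

end Selection

section TailHull

variable {E : Type*} [NormedAddCommGroup E] [NormedSpace ℝ E]

def tailHull (w : ℕ → E) : Set E :=
  ⋂ m, closedConvexHull ℝ (range fun n => w (n + m))

theorem antitone_closedConvexHull_tail (w : ℕ → E) :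
    Antitone fun m => closedConvexHull ℝ (range fun n => w (n + m)) := fun m m' h =>
  (closedConvexHull ℝ).monotone (range_subset_iff.2 fun n => ⟨n + (m' - m), by
    simp only [add_assoc, Nat.sub_add_cancel h]⟩)

theorem isClosed_tailHull (w : ℕ → E) : IsClosed (tailHull w) :=
  isClosed_iInter fun _ => isClosed_closedConvexHull

theorem tailHull_subset_closure_span (w : ℕ → E) :
    tailHull w ⊆ closure (Submodule.span ℝ (range w)) :=
  iInter_subset_of_subset 0 <| closedConvexHull_min
    (by simpa using Submodule.subset_span.trans subset_closure)
    (Submodule.convex _).closure isClosed_closure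

theorem tailHull_nonempty (hrefl : Function.Surjective (NormedSpace.inclusionInDoubleDual ℝ E))
    {w : ℕ → E} (hw : Bornology.IsBounded (range w)) : (tailHull w).Nonempty :=
  nonempty_iInter_of_reflexive hrefl (antitone_closedConvexHull_tail w)
    (fun m => ⟨w (0 + m), subset_closedConvexHull (mem_range_self 0)⟩)
    (fun _ => isClosed_closedConvexHull) (fun _ => convex_closedConvexHull)
    (by simpa [closedConvexHull_eq_closure_convexHull] using (isBounded_convexHull.2 hw).closure)

theorem infEDist_tailHull (hrefl : Function.Surjective (NormedSpace.inclusionInDoubleDual ℝ E))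
    (w : ℕ → E) (e : E) :
    infEDist e (tailHull w) = ⨆ m, infEDist e (convexHull ℝ (range fun n => w (n + m))) := by
  rw [tailHull, infEDist_iInter_of_reflexive hrefl (antitone_closedConvexHull_tail w)
    (fun _ => isClosed_closedConvexHull) (fun _ => convex_closedConvexHull)]
  simp_rw [closedConvexHull_eq_closure_convexHull, infEDist_closure]

theorem measurable_infEDist_tailHull
    (hrefl : Function.Surjective (NormedSpace.inclusionInDoubleDual ℝ E)) {X : Type*}
    [MeasurableSpace X] {f : ℕ → X → E} (hf : ∀ n, StronglyMeasurable (f n)) (e : E) :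
    Measurable fun x => infEDist e (tailHull fun n => f n x) := by
  simp_rw [infEDist_tailHull hrefl]
  exact .iSup fun m => measurable_infEDist_convexHull_range (fun n => hf (n + m)) e

theorem tailHull_subset_of_upperSemicontinuousAt {Y : Type*} [TopologicalSpace Y]
    {Φ : Y → Set E} {a : Y} {v : ℕ → Y} {w : ℕ → E} (hclosed : IsClosed (Φ a))
    (hconv : Convex ℝ (Φ a))
    (husc : ∀ φ : E →L[ℝ] ℝ, UpperSemicontinuousAt (fun y => ⨆ z ∈ Φ y, ((φ z : ℝ) : EReal)) a)
    (hv : Tendsto v atTop (𝓝 a)) (hw : ∀ n, w n ∈ Φ (v n)) : tailHull w ⊆ Φ a := by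
  intro y hy
  by_contra hya
  obtain ⟨φ, c, hΦc, hcy⟩ := geometric_hahn_banach_closed_point hconv hclosed hya
  obtain ⟨θ, hcθ, hθy⟩ := exists_between hcy
  have hsup : (⨆ z ∈ Φ a, ((φ z : ℝ) : EReal)) < θ :=
    (iSup₂_le fun z hz => EReal.coe_le_coe_iff.2 (hΦc z hz).le).trans_lt
      (EReal.coe_lt_coe_iff.2 hcθ)
  obtain ⟨m, hm⟩ := eventually_atTop.1 (hv.eventually (husc φ _ hsup))
  have htail : closedConvexHull ℝ (range fun n => w (n + m)) ⊆ {z | φ z ≤ θ} := by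
    refine closedConvexHull_min (range_subset_iff.2 fun n => ?_)
      (convex_halfSpace_le φ.isLinear θ) (isClosed_le φ.continuous continuous_const)
    exact EReal.coe_le_coe_iff.1 ((le_iSup₂ (f := fun z _ => ((φ z : ℝ) : EReal)) _
      (hw (n + m))).trans (hm _ (Nat.le_add_left m n)).le)
  exact (htail (mem_iInter.1 hy m)).not_gt hθy

end TailHull

theorem isBounded_range_of_norm_le_mul {E : Type*} [NormedAddCommGroup E] {v w : ℕ → E} {a : E}
    {β : ℝ} (hw : ∀ n, ‖w n‖ ≤ β * (1 + ‖v n‖)) (hv : Tendsto v atTop (𝓝 a)) :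
    Bornology.IsBounded (range w) := by
  obtain ⟨C, hC⟩ := isBounded_iff_forall_norm_le.1 (isBounded_range_of_tendsto _ hv)
  refine isBounded_iff_forall_norm_le.2 ⟨|β| * (1 + C), forall_mem_range.2 fun n => ?_⟩
  have hvn := hC _ (mem_range_self n)
  calc ‖w n‖ ≤ β * (1 + ‖v n‖) := hw n
    _ ≤ |β| * (1 + ‖v n‖) := mul_le_mul_of_nonneg_right (le_abs_self β) (by positivity)
    _ ≤ |β| * (1 + C) := by gcongr

theorem IsCompact.integrableOn_of_norm_le_mul {α F F' : Type*} [TopologicalSpace α]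
    [T2Space α] [MeasurableSpace α] [OpensMeasurableSpace α] [NormedAddCommGroup F]
    [NormedAddCommGroup F'] {μ : Measure α} {K : Set α} (hK : IsCompact K) {g : α → F}
    {u : α → F'} {b : α → ℝ} (hg : AEStronglyMeasurable g (μ.restrict K)) (hu : ContinuousOn u K)
    (hb : IntegrableOn b K μ) (hgb : ∀ᵐ x ∂μ.restrict K, ‖g x‖ ≤ b x * (1 + ‖u x‖)) :
    IntegrableOn g K μ := by
  obtain ⟨C, hC⟩ := hK.exists_bound_of_continuousOn hu
  refine Integrable.mono' (hb.mul_const (1 + C)) hg ?_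
  filter_upwards [hgb, ae_restrict_mem hK.measurableSet] with x hgx hxK
  nlinarith [norm_nonneg (g x), norm_nonneg (u x), hC x hxK]

theorem stmt_10_general
    (N : ℕ) {E : Type*} [NormedAddCommGroup E] [NormedSpace ℝ E] [CompleteSpace E]
    -- E reflexive
    (hrefl : Function.Surjective (NormedSpace.inclusionInDoubleDual ℝ E))
    (Ω : Set (Fin N → ℝ)) (hΩ : IsOpen Ω)
    (F : (Fin N → ℝ) → E → Set E)
    -- (F1) nonempty closed convex values
    (hF1 : ∀ x ∈ Ω, ∀ u : E, (F x u).Nonempty ∧ IsClosed (F x u) ∧ Convex ℝ (F x u))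
    -- (F2) F(·,u) has a strongly measurable selection
    (hF2 : ∀ u : E, ∃ s : (Fin N → ℝ) → E, StronglyMeasurable s ∧ ∀ x ∈ Ω, s x ∈ F x u)
    -- (F3) F(x,·) is upper hemicontinuous for a.e. x ∈ Ω
    (hF3 : ∀ᵐ x ∂(volume.restrict Ω), ∀ φ : E →L[ℝ] ℝ,
      UpperSemicontinuous (fun u : E => ⨆ y ∈ F x u, ((φ y : ℝ) : EReal)))
    -- (F4) linear growth with b ∈ L¹_loc(Ω)
    (b : (Fin N → ℝ) → ℝ)
    (hbloc : ∀ K ⊆ Ω, IsCompact K → IntegrableOn b K)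
    (hF4 : ∀ᵐ x ∂(volume.restrict Ω), ∀ u : E, ∀ y ∈ F x u, ‖y‖ ≤ b x * (1 + ‖u‖)) :
    ∀ u : (Fin N → ℝ) → E, ContinuousOn u Ω →
      ∃ w : (Fin N → ℝ) → E, StronglyMeasurable w ∧
        (∀ K ⊆ Ω, IsCompact K → IntegrableOn w K) ∧
        ∀ᵐ x ∂(volume.restrict Ω), w x ∈ F x (u x) := by
  classical
  intro u hu
  have hΩm : MeasurableSet Ω := hΩ.measurableSet
  have hu_meas : StronglyMeasurable (Ω.piecewise u 0) :=
    hu.stronglyMeasurable_piecewise continuousOn_const hΩm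
  have hv : ∀ x ∈ Ω, Tendsto (fun n => hu_meas.approx n x) atTop (𝓝 (u x)) := fun x hx => by
    simpa only [piecewise_eq_of_mem _ _ _ hx] using hu_meas.tendsto_approx x
  choose s hs_meas hs_mem using hF2
  set w : ℕ → (Fin N → ℝ) → E := fun n x => s (hu_meas.approx n x) x
  have hw_meas : ∀ n, StronglyMeasurable (w n) := fun n =>
    (hu_meas.approx n).stronglyMeasurable_bind hs_meas
  obtain ⟨S, hS_ae, hS_meas, hS⟩ := (hF3.and hF4).exists_measurable_mem
  have hG : ∀ x ∈ S ∩ Ω, (tailHull fun n => w n x).Nonempty ∧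
      tailHull (fun n => w n x) ⊆ F x (u x) := by
    rintro x ⟨hxS, hxΩ⟩
    have hwF : ∀ n, w n x ∈ F x (hu_meas.approx n x) := fun n => hs_mem _ x hxΩ
    exact ⟨tailHull_nonempty hrefl
        (isBounded_range_of_norm_le_mul (fun n => (hS x hxS).2 _ _ (hwF n)) (hv x hxΩ)),
      tailHull_subset_of_upperSemicontinuousAt (hF1 x hxΩ (u x)).2.1 (hF1 x hxΩ (u x)).2.2
        (fun φ => (hS x hxS).1 φ (u x)) (hv x hxΩ) hwF⟩
  obtain ⟨g, hg_meas, hg⟩ := exists_stronglyMeasurable_forall_mem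
    (G := fun x => tailHull fun n => w n x) (hS_meas.inter hΩm)
    (TopologicalSpace.IsSeparable.iUnion fun n => (hw_meas n).isSeparable_range).span.closure
    (fun x _ => (tailHull_subset_closure_span _).trans (closure_mono (Submodule.span_mono
      (range_subset_iff.2 fun n => mem_iUnion.2 ⟨n, mem_range_self x⟩))))
    (fun x _ => isClosed_tailHull _) (fun x hx => (hG x hx).1)
    (measurable_infEDist_tailHull hrefl hw_meas)
  have hgF : ∀ x ∈ S ∩ Ω, g x ∈ F x (u x) := fun x hx => (hG x hx).2 (hg x hx)
  have hSΩ : ∀ᵐ x ∂(volume.restrict Ω), x ∈ S ∩ Ω := inter_mem hS_ae (ae_restrict_mem hΩm)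
  refine ⟨g, hg_meas, fun K hKΩ hK => ?_, hSΩ.mono hgF⟩
  refine hK.integrableOn_of_norm_le_mul hg_meas.aestronglyMeasurable (hu.mono hKΩ)
    (hbloc K hKΩ hK) ?_
  filter_upwards [ae_restrict_of_ae_restrict_of_subset hKΩ hSΩ] with x hx
  exact (hS x hx.1).2 _ _ (hgF x hx)

/-- Under conditions (F1)-(F4), for every continuous `u : Ω → E`
(`E` a reflexive Banach space) the Nemytskii set
`N_F(u) = {w ∈ L¹_loc(Ω,E) : w(x) ∈ F(x,u(x)) a.e.}` is nonempty. -/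
theorem stmt_10
    (N : ℕ) {E : Type*} [NormedAddCommGroup E] [NormedSpace ℝ E] [CompleteSpace E]
    -- E reflexive
    (hrefl : Function.Surjective (NormedSpace.inclusionInDoubleDual ℝ E))
    (Ω : Set (Fin N → ℝ)) (hΩ : IsOpen Ω)
    (F : (Fin N → ℝ) → E → Set E)
    -- (F1) nonempty closed convex values
    (hF1 : ∀ x ∈ Ω, ∀ u : E, (F x u).Nonempty ∧ IsClosed (F x u) ∧ Convex ℝ (F x u))
    -- (F2) F(·,u) has a strongly measurable selection
    (hF2 : ∀ u : E, ∃ s : (Fin N → ℝ) → E, StronglyMeasurable s ∧ ∀ x ∈ Ω, s x ∈ F x u)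
    -- (F3) F(x,·) is upper hemicontinuous for a.e. x ∈ Ω
    (hF3 : ∀ᵐ x ∂(volume.restrict Ω), ∀ φ : E →L[ℝ] ℝ,
      UpperSemicontinuous (fun u : E => ⨆ y ∈ F x u, ((φ y : ℝ) : EReal)))
    -- (F4) linear growth with b ∈ L¹_loc(Ω)
    (b : (Fin N → ℝ) → ℝ) (hbmeas : Measurable b)
    (hbloc : ∀ K ⊆ Ω, IsCompact K → IntegrableOn b K)
    (hF4 : ∀ᵐ x ∂(volume.restrict Ω), ∀ u : E, ∀ y ∈ F x u, ‖y‖ ≤ b x * (1 + ‖u‖)) :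
    ∀ u : (Fin N → ℝ) → E, ContinuousOn u Ω →
      ∃ w : (Fin N → ℝ) → E, StronglyMeasurable w ∧
        (∀ K ⊆ Ω, IsCompact K → IntegrableOn w K) ∧
        ∀ᵐ x ∂(volume.restrict Ω), w x ∈ F x (u x) :=
  stmt_10_general N hrefl Ω hΩ F hF1 hF2 hF3 b hbloc hF4
end
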